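/- Let β, κ, γ > 0 and for ω > 0 let α(ω) = (β/κ)^{1/4}·(ω² − i(γ/β)ω)^{1/4} ∈ ℂ, where z^{1/4} = exp((1/4)·Log z) denotes the principal fourth root. Then there exist ω₀ > 0 and M > 0 such that for all ω ≥ ω₀: cos(α(ω)) ≠ 0 and |tan(α(ω))| ≤ M·√ω. -/

import Mathlib

/-!
Writing `u = α(ω)`, one has `‖cos u‖ ≥ |sinh (Im u)| ≥ |Im u|` and `‖sin u‖ ≤ ‖cos u‖ + 1`
(from `sin² u = 1 - cos² u`), so `‖tan u‖ ≤ 1 + 1 / |Im u|` as soon as `Im u ≠ 0`.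
The radicand `z = ω² - i(γ/β)ω` has `|z| ≍ ω²` and `|Im z| / |z| ≍ 1/ω`, and Jordan's inequality
for `sin (arg z / 4)` turns this into `|Im (z^{1/4})| ≳ |z|^{1/4} · |Im z| / |z| ≍ 1/√ω`.
-/

/-- The characteristic wavenumber `α(ω) = (β/κ)^{1/4}·(ω² − i(γ/β)ω)^{1/4}`, where
`z^{1/4} = exp((1/4)·Log z)` is the principal fourth root. -/
noncomputable def alphaWN (β κ γ ω : ℝ) : ℂ :=
  ((β / κ) ^ ((1:ℝ)/4) : ℝ) *
    Complex.exp ((1/4 : ℂ) * Complex.log ((ω:ℂ) ^ 2 - Complex.I * ((γ:ℂ) / (β:ℂ)) * (ω:ℂ)))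

open Complex

theorem norm_sin_le_norm_cos_add_one (u : ℂ) : ‖sin u‖ ≤ ‖cos u‖ + 1 := by
  have h : ‖sin u‖ ^ 2 ≤ (‖cos u‖ + 1) ^ 2 :=
    calc ‖sin u‖ ^ 2 = ‖1 - cos u ^ 2‖ := by
          rw [← norm_pow, ← sin_sq_add_cos_sq u, add_sub_cancel_right]
      _ ≤ 1 + ‖cos u‖ ^ 2 := (norm_sub_le _ _).trans_eq (by rw [norm_one, norm_pow])
      _ ≤ (‖cos u‖ + 1) ^ 2 := by nlinarith [norm_nonneg (cos u)]
  exact (pow_le_pow_iff_left₀ (norm_nonneg _) (by positivity) two_ne_zero).mp h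

theorem abs_sinh_im_le_norm_cos (u : ℂ) : |Real.sinh u.im| ≤ ‖cos u‖ := by
  have h := abs_norm_sub_norm_le (exp (-u * I)) (-exp (u * I))
  rw [norm_neg, sub_neg_eq_add, add_comm, ← two_cos, norm_mul, norm_exp, norm_exp] at h
  simp only [neg_mul, neg_re, mul_re, I_re, mul_zero, I_im, mul_one, zero_sub, neg_neg,
    norm_ofNat] at h
  rw [Real.sinh_eq, abs_div, abs_two]
  linarith

theorem abs_im_le_norm_cos (u : ℂ) : |u.im| ≤ ‖cos u‖ :=
  calc |u.im| ≤ Real.sinh |u.im| := Real.self_le_sinh_iff.mpr (abs_nonneg _)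
    _ = |Real.sinh u.im| := (Real.abs_sinh _).symm
    _ ≤ ‖cos u‖ := abs_sinh_im_le_norm_cos u

theorem cos_ne_zero_of_im_ne_zero {u : ℂ} (hu : u.im ≠ 0) : cos u ≠ 0 :=
  norm_pos_iff.mp ((abs_pos.mpr hu).trans_le (abs_im_le_norm_cos u))

theorem norm_tan_le_one_add_inv_abs_im {u : ℂ} (hu : u.im ≠ 0) : ‖tan u‖ ≤ 1 + |u.im|⁻¹ := by
  have hcos : 0 < ‖cos u‖ := norm_pos_iff.mpr (cos_ne_zero_of_im_ne_zero hu)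
  calc ‖tan u‖ = ‖sin u‖ / ‖cos u‖ := by rw [tan_eq_sin_div_cos, norm_div]
    _ ≤ (‖cos u‖ + 1) / ‖cos u‖ := by gcongr; exact norm_sin_le_norm_cos_add_one u
    _ = 1 + ‖cos u‖⁻¹ := by field_simp
    _ ≤ 1 + |u.im|⁻¹ := by gcongr; exact abs_im_le_norm_cos u

open Real in
theorem two_div_pi_mul_le_abs_im_exp_mul_log {s : ℝ} (hs₀ : 0 ≤ s) (hs : s ≤ 1 / 2) (z : ℂ) :
    2 / π * s * ‖z‖ ^ s * (|z.im| / ‖z‖) ≤ |(exp (s * log z)).im| := by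
  rcases eq_or_ne z 0 with rfl | hz
  · simp
  have hsarg : |s * arg z| ≤ π / 2 := by
    rw [abs_mul, abs_of_nonneg hs₀]
    nlinarith [abs_arg_le_pi z, abs_nonneg (arg z), pi_pos]
  have hsin : 2 / π * s * (|z.im| / ‖z‖) ≤ |Real.sin (s * arg z)| :=
    calc 2 / π * s * (|z.im| / ‖z‖) = 2 / π * s * |Real.sin (arg z)| := by
          rw [sin_arg, abs_div, abs_norm]
      _ ≤ 2 / π * s * |arg z| := mul_le_mul_of_nonneg_left abs_sin_le_abs (by positivity)
      _ = 2 / π * |s * arg z| := by rw [abs_mul, abs_of_nonneg hs₀, mul_assoc]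
      _ ≤ |Real.sin (s * arg z)| := mul_abs_le_abs_sin hsarg
  rw [exp_im, re_ofReal_mul, im_ofReal_mul, log_re, log_im, abs_mul, abs_exp, mul_comm s,
    ← rpow_def_of_pos (norm_pos_iff.mpr hz)]
  nlinarith [rpow_nonneg (norm_nonneg z) s]

open Real in
theorem div_sqrt_le_abs_im_exp_quarter_mul_log {a ω : ℝ} (ha : 0 ≤ a) (hω : 1 ≤ ω) :
    a / (2 * π * (1 + a)) / √ω ≤
      |(exp (((1 / 4 : ℝ) : ℂ) * log ((ω : ℂ) ^ 2 - I * a * ω))).im| := by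
  set z : ℂ := (ω : ℂ) ^ 2 - I * a * ω
  have hω₀ : 0 < ω := by linarith
  have hre : z.re = ω ^ 2 := by simp [z, pow_two]
  have him : |z.im| = a * ω := by simp [z, pow_two, abs_of_nonneg ha, abs_of_pos hω₀]
  have hz_lower : ω ^ 2 ≤ ‖z‖ := hre ▸ re_le_norm z
  have hz_upper : ‖z‖ ≤ (1 + a) * ω ^ 2 := by
    have := norm_le_abs_re_add_abs_im z
    rw [hre, him, abs_of_nonneg (sq_nonneg ω)] at this
    nlinarith
  have hz₀ : 0 < ‖z‖ := lt_of_lt_of_le (by positivity) hz_lower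
  have hroot : √ω ≤ ‖z‖ ^ (1 / 4 : ℝ) :=
    calc √ω = (ω ^ 2) ^ (1 / 4 : ℝ) := by
          rw [sqrt_eq_rpow, ← rpow_natCast, ← rpow_mul hω₀.le]; norm_num
      _ ≤ ‖z‖ ^ (1 / 4 : ℝ) := by gcongr
  calc a / (2 * π * (1 + a)) / √ω = 2 / π * (1 / 4) * √ω * (a * ω / ((1 + a) * ω ^ 2)) := by
        field_simp
        rw [sq_sqrt hω₀.le]
        ring
    _ ≤ 2 / π * (1 / 4) * ‖z‖ ^ (1 / 4 : ℝ) * (|z.im| / ‖z‖) := by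
        rw [him]
        gcongr
    _ ≤ _ := two_div_pi_mul_le_abs_im_exp_mul_log (by norm_num) (by norm_num) z

open Real in
theorem div_sqrt_le_abs_im_alphaWN {β κ γ ω : ℝ} (hβκ : 0 ≤ β / κ) (hγβ : 0 ≤ γ / β)
    (hω : 1 ≤ ω) :
    (β / κ) ^ (1 / 4 : ℝ) * (γ / β / (2 * π * (1 + γ / β))) / √ω ≤
      |(alphaWN β κ γ ω).im| := by
  have hα : alphaWN β κ γ ω = ((β / κ) ^ (1 / 4 : ℝ) : ℝ) *
      exp (((1 / 4 : ℝ) : ℂ) * log ((ω : ℂ) ^ 2 - I * ((γ / β : ℝ) : ℂ) * ω)) := by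
    rw [alphaWN]; push_cast; rfl
  rw [hα, im_ofReal_mul, abs_mul, abs_of_nonneg (rpow_nonneg hβκ _), mul_div_assoc]
  gcongr
  exact div_sqrt_le_abs_im_exp_quarter_mul_log hγβ hω

/-- For large `ω`, `cos(α(ω)) ≠ 0` and `|tan(α(ω))| ≤ M√ω`. -/
theorem tan_alphaWN_bound (β κ γ : ℝ) (hβ : 0 < β) (hκ : 0 < κ) (hγ : 0 < γ) :
    ∃ ω₀ > (0:ℝ), ∃ M > (0:ℝ), ∀ ω : ℝ, ω₀ ≤ ω →
      Complex.cos (alphaWN β κ γ ω) ≠ 0 ∧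
      ‖Complex.tan (alphaWN β κ γ ω)‖ ≤ M * Real.sqrt ω := by
  set k := (β / κ) ^ (1 / 4 : ℝ) * (γ / β / (2 * Real.pi * (1 + γ / β)))
  have hk : 0 < k := by positivity
  refine ⟨1, one_pos, 1 + k⁻¹, by positivity, fun ω hω => ?_⟩
  have hsqrt : 1 ≤ √ω := Real.one_le_sqrt.mpr hω
  have hbound : k / √ω ≤ |(alphaWN β κ γ ω).im| :=
    div_sqrt_le_abs_im_alphaWN (by positivity) (by positivity) hω
  have him : 0 < |(alphaWN β κ γ ω).im| := (by positivity : 0 < k / √ω).trans_le hbound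
  refine ⟨cos_ne_zero_of_im_ne_zero (abs_pos.mp him),
    (norm_tan_le_one_add_inv_abs_im (abs_pos.mp him)).trans ?_⟩
  calc 1 + |(alphaWN β κ γ ω).im|⁻¹ ≤ 1 + (k / √ω)⁻¹ := by gcongr
    _ = 1 + k⁻¹ * √ω := by rw [inv_div, div_eq_inv_mul]
    _ ≤ (1 + k⁻¹) * √ω := by nlinarith [inv_pos.mpr hk]
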